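/- arXiv:2307.00405 — 7 statements merged into one kernel-verified Lean document; each statement's English description precedes it below -/
import Mathlib

section
/- Let X and Y be finite sets, let P, Q : X → [0,∞) be nonnegative (bounded) measures, and for each x ∈ X let P_{Y|X}(·|x) and Q_{Y|X}(·|x) be probability distributions on Y (i.e., nonnegative and summing to 1 over y for each x). Define the joint measures P_{X,Y}(x,y) = P_{Y|X}(y|x)·P(x) and Q_{X,Y}(x,y) = Q_{Y|X}(y|x)·Q(x) on X × Y. Then ∑_{x∈X} P(x)·D_H²(P_{Y|X}(·|x), Q_{Y|X}(·|x)) ≤ 8·D_H²(P_{X,Y}, Q_{X,Y}). -/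
/-- For nonnegative measures `P, Q` on a finite set `X` and conditional
probability distributions `Pc, Qc` on a finite set `Y`, with joint measures
`(x,y) ↦ Pc x y * P x` and `(x,y) ↦ Qc x y * Q x`, the expected conditional
Hellinger-squared distance is at most `8` times the joint Hellinger-squared distance. -/
theorem expected_conditional_hellinger_le_joint
    {X Y : Type*} [Fintype X] [Fintype Y]
    (P Q : X → ℝ) (Pc Qc : X → Y → ℝ)
    (hP : ∀ x, 0 ≤ P x) (hQ : ∀ x, 0 ≤ Q x)
    (hPc : ∀ x y, 0 ≤ Pc x y) (hQc : ∀ x y, 0 ≤ Qc x y)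
    (hPcsum : ∀ x, ∑ y, Pc x y = 1) (hQcsum : ∀ x, ∑ y, Qc x y = 1) :
    ∑ x, P x * ((1 / 2) * ∑ y, (Real.sqrt (Pc x y) - Real.sqrt (Qc x y)) ^ 2)
      ≤ 8 * ((1 / 2) * ∑ x, ∑ y,
          (Real.sqrt (Pc x y * P x) - Real.sqrt (Qc x y * Q x)) ^ 2) := by
  have key : ∀ x : X,
      P x * ((1 / 2) * ∑ y, (Real.sqrt (Pc x y) - Real.sqrt (Qc x y)) ^ 2)
        ≤ 4 * ∑ y, (Real.sqrt (Pc x y * P x) - Real.sqrt (Qc x y * Q x)) ^ 2 := by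
    intro x
    set p := Real.sqrt (P x) with hp
    set q := Real.sqrt (Q x) with hq
    have hp2 : p ^ 2 = P x := Real.sq_sqrt (hP x)
    have hq2 : q ^ 2 = Q x := Real.sq_sqrt (hQ x)
    have hpn : 0 ≤ p := Real.sqrt_nonneg _
    have hqn : 0 ≤ q := Real.sqrt_nonneg _
    have hrwP : ∀ y, Real.sqrt (Pc x y * P x) = Real.sqrt (Pc x y) * p :=
      fun y => Real.sqrt_mul (hPc x y) _
    have hrwQ : ∀ y, Real.sqrt (Qc x y * Q x) = Real.sqrt (Qc x y) * q :=
      fun y => Real.sqrt_mul (hQc x y) _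
    simp only [hrwP, hrwQ]
    set a : Y → ℝ := fun y => Real.sqrt (Pc x y) with ha
    set b : Y → ℝ := fun y => Real.sqrt (Qc x y) with hb
    have ha2 : ∀ y, a y ^ 2 = Pc x y := fun y => Real.sq_sqrt (hPc x y)
    have hb2 : ∀ y, b y ^ 2 = Qc x y := fun y => Real.sq_sqrt (hQc x y)
    have hsa : ∑ y, a y ^ 2 = 1 := by simp only [ha2]; exact hPcsum x
    have hsb : ∑ y, b y ^ 2 = 1 := by simp only [hb2]; exact hQcsum x
    have hcs : ∑ y, a y * b y ≤ 1 := by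
      have h := Finset.sum_mul_sq_le_sq_mul_sq Finset.univ a b
      rw [hsa, hsb] at h
      have hnn : 0 ≤ ∑ y, a y * b y :=
        Finset.sum_nonneg fun y _ =>
          mul_nonneg (Real.sqrt_nonneg _) (Real.sqrt_nonneg _)
      nlinarith
    -- expansion of the joint term
    have hS : ∑ y, (a y * p - b y * q) ^ 2
        = P x + Q x - 2 * p * q * ∑ y, a y * b y := by
      have h1 : ∀ y, (a y * p - b y * q) ^ 2
          = p ^ 2 * a y ^ 2 + q ^ 2 * b y ^ 2 - 2 * p * q * (a y * b y) := by
        intro y; ring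
      calc ∑ y, (a y * p - b y * q) ^ 2
          = ∑ y, (p ^ 2 * a y ^ 2 + q ^ 2 * b y ^ 2 - 2 * p * q * (a y * b y)) :=
            Finset.sum_congr rfl fun y _ => h1 y
        _ = p ^ 2 * ∑ y, a y ^ 2 + q ^ 2 * ∑ y, b y ^ 2
              - 2 * p * q * ∑ y, a y * b y := by
            rw [Finset.sum_sub_distrib, Finset.sum_add_distrib,
              ← Finset.mul_sum, ← Finset.mul_sum, ← Finset.mul_sum]
        _ = P x + Q x - 2 * p * q * ∑ y, a y * b y := by
            rw [hsa, hsb, hp2, hq2]; ring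
    have hSnn : 0 ≤ ∑ y, (a y * p - b y * q) ^ 2 :=
      Finset.sum_nonneg fun y _ => sq_nonneg _
    -- marginal Hellinger bound
    have hB : (p - q) ^ 2 ≤ ∑ y, (a y * p - b y * q) ^ 2 := by
      rw [hS]
      have hpq : 0 ≤ p * q := mul_nonneg hpn hqn
      nlinarith [hp2, hq2]
    -- per-y pointwise bound, summed
    have hA : P x * ∑ y, (a y - b y) ^ 2
        ≤ 2 * ∑ y, (a y * p - b y * q) ^ 2 + 2 * (q - p) ^ 2 := by
      have h1 : ∀ y, P x * (a y - b y) ^ 2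
          ≤ 2 * (a y * p - b y * q) ^ 2 + 2 * b y ^ 2 * (q - p) ^ 2 := by
        intro y
        rw [← hp2]
        nlinarith [sq_nonneg ((a y * p - b y * q) - b y * (q - p))]
      calc P x * ∑ y, (a y - b y) ^ 2
          = ∑ y, P x * (a y - b y) ^ 2 := Finset.mul_sum _ _ _
        _ ≤ ∑ y, (2 * (a y * p - b y * q) ^ 2 + 2 * b y ^ 2 * (q - p) ^ 2) :=
            Finset.sum_le_sum fun y _ => h1 y
        _ = 2 * ∑ y, (a y * p - b y * q) ^ 2
              + 2 * (q - p) ^ 2 * ∑ y, b y ^ 2 := by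
            rw [Finset.sum_add_distrib, ← Finset.mul_sum]
            congr 1
            rw [Finset.mul_sum]
            exact Finset.sum_congr rfl fun y _ => by ring
        _ = 2 * ∑ y, (a y * p - b y * q) ^ 2 + 2 * (q - p) ^ 2 := by
            rw [hsb]; ring
    have hqp : (q - p) ^ 2 = (p - q) ^ 2 := by ring
    rw [hqp] at hA
    linarith
  calc ∑ x, P x * ((1 / 2) * ∑ y, (Real.sqrt (Pc x y) - Real.sqrt (Qc x y)) ^ 2)
      ≤ ∑ x, 4 * ∑ y, (Real.sqrt (Pc x y * P x) - Real.sqrt (Qc x y * Q x)) ^ 2 :=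
        Finset.sum_le_sum fun x _ => key x
    _ = 8 * ((1 / 2) * ∑ x, ∑ y,
          (Real.sqrt (Pc x y * P x) - Real.sqrt (Qc x y * Q x)) ^ 2) := by
        rw [← Finset.mul_sum]; ring
end

section
/- Let X and Y be finite sets, let P, Q : X → [0,∞) be nonnegative measures, and for each x ∈ X let P_{Y|X}(·|x) and Q_{Y|X}(·|x) be probability distributions on Y. Define the joint measures P_{X,Y}(x,y) = P_{Y|X}(y|x)·P(x) and Q_{X,Y}(x,y) = Q_{Y|X}(y|x)·Q(x). Then ∑_{x∈X} ∑_{y∈Y} √(P_{X,Y}(x,y)·Q_{X,Y}(x,y)) ≤ ∑_{x∈X} √(P(x)·Q(x)). -/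
/-- For nonnegative measures `P, Q` on a finite set `X` and conditional
probability distributions `Pc, Qc` on a finite set `Y`, the Bhattacharyya sum of the
joint measures is at most that of the marginals:
`∑ x, ∑ y, √((Pc x y * P x) * (Qc x y * Q x)) ≤ ∑ x, √(P x * Q x)`. -/
theorem joint_bhattacharyya_le_marginal
    {X Y : Type*} [Fintype X] [Fintype Y]
    (P Q : X → ℝ) (Pc Qc : X → Y → ℝ)
    (hP : ∀ x, 0 ≤ P x) (hQ : ∀ x, 0 ≤ Q x)
    (hPc : ∀ x y, 0 ≤ Pc x y) (hQc : ∀ x y, 0 ≤ Qc x y)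
    (hPcsum : ∀ x, ∑ y, Pc x y = 1) (hQcsum : ∀ x, ∑ y, Qc x y = 1) :
    ∑ x, ∑ y, Real.sqrt ((Pc x y * P x) * (Qc x y * Q x))
      ≤ ∑ x, Real.sqrt (P x * Q x) := by
  apply Finset.sum_le_sum
  intro x _
  have key : ∑ y, Real.sqrt (Pc x y) * Real.sqrt (Qc x y) ≤ 1 := by
    have := Real.sum_sqrt_mul_sqrt_le (f := Pc x) (g := Qc x) Finset.univ
      (hPc x) (hQc x)
    simpa [hPcsum x, hQcsum x] using this
  calc ∑ y, Real.sqrt ((Pc x y * P x) * (Qc x y * Q x))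
      = (∑ y, Real.sqrt (Pc x y) * Real.sqrt (Qc x y)) * Real.sqrt (P x * Q x) := by
        rw [Finset.sum_mul]
        refine Finset.sum_congr rfl fun y _ => ?_
        rw [show (Pc x y * P x) * (Qc x y * Q x) = (Pc x y * Qc x y) * (P x * Q x) by ring,
          Real.sqrt_mul (mul_nonneg (hPc x y) (hQc x y)), Real.sqrt_mul (hPc x y)]
    _ ≤ 1 * Real.sqrt (P x * Q x) := by
        exact mul_le_mul_of_nonneg_right key (Real.sqrt_nonneg _)
    _ = Real.sqrt (P x * Q x) := one_mul _
end

section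
/- Let λ > 0, let I be a finite index set with a subset J ⊆ I, and let (x_i)_{i∈I} and (y_i)_{i∈I} be vectors in ℝ^d such that the linear span of {x_i : i ∈ I} has dimension at most r and the linear span of {y_i : i ∈ I} has dimension at most r. Let A = λ·I_d + ∑_{j∈J} x_j x_jᵀ and B = λ·I_d + ∑_{j∈J} y_j y_jᵀ. Then for every i ∈ I: ‖x_i‖_{A⁻¹} ≤ (1/√λ)·‖x_i − y_i‖₂ + (1 + (2√r/√λ)·√(∑_{j∈J} ‖x_j − y_j‖₂²))·‖y_i‖_{B⁻¹}. -/
/-!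
Write `A = Φₓᵀ Φₓ` and `B = Φᵧᵀ Φᵧ`, where `Φₓ v = (√λ v, (⟨x_j, v⟩)_{j ∈ J})`. By
Cauchy–Schwarz in each row, `‖Φᵧ v - Φₓ v‖ ≤ √D ‖v‖ ≤ √(D / λ) ‖Φₓ v‖` with
`D = ∑_{j ∈ J} ‖x_j - y_j‖²`, hence `B ≤ (1 + √(D / λ))² A` as quadratic forms. Inversion reverses this comparison, so
`‖y_i‖_{A⁻¹} ≤ (1 + √(D / λ)) ‖y_i‖_{B⁻¹}`; likewise `λ I ≤ A` gives `‖v‖_{A⁻¹} ≤ ‖v‖₂ / √λ`.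
The triangle inequality for `‖·‖_{A⁻¹}` applied to `x_i = (x_i - y_i) + y_i` finishes the proof:
if `x_i ≠ 0` the rank bound gives `1 ≤ r`, and if `x_i = 0` there is nothing to prove.
-/

open Matrix

namespace Matrix

variable {m n : Type*} [Fintype m] [Fintype n]

lemma dotProduct_transpose_mul_mulVec (N : Matrix m n ℝ) (u v : n → ℝ) :
    u ⬝ᵥ (Nᵀ * N) *ᵥ v = inner ℝ (WithLp.toLp 2 (N *ᵥ u)) (WithLp.toLp 2 (N *ᵥ v)) := by
  rw [EuclideanSpace.inner_toLp_toLp, star_trivial, ← mulVec_mulVec, dotProduct_mulVec,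
    vecMul_transpose, dotProduct_comm]

open scoped MatrixOrder in
lemma PosSemidef.exists_dotProduct_mulVec_eq_inner [DecidableEq n] {M : Matrix n n ℝ}
    (hM : M.PosSemidef) :
    ∃ N : Matrix n n ℝ, ∀ u v,
      u ⬝ᵥ M *ᵥ v = inner ℝ (WithLp.toLp 2 (N *ᵥ u)) (WithLp.toLp 2 (N *ᵥ v)) := by
  obtain ⟨N, rfl⟩ := CStarAlgebra.nonneg_iff_eq_star_mul_self.mp hM.nonneg
  exact ⟨N, dotProduct_transpose_mul_mulVec N⟩

variable [DecidableEq n] {M : Matrix n n ℝ}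

lemma PosSemidef.sqrt_dotProduct_mulVec_add_le (hM : M.PosSemidef) (u v : n → ℝ) :
    √((u + v) ⬝ᵥ M *ᵥ (u + v)) ≤ √(u ⬝ᵥ M *ᵥ u) + √(v ⬝ᵥ M *ᵥ v) := by
  obtain ⟨N, hN⟩ := hM.exists_dotProduct_mulVec_eq_inner
  rw [hN, hN, hN, mulVec_add, WithLp.toLp_add]
  simp only [real_inner_self_eq_norm_sq, Real.sqrt_sq_eq_abs, abs_norm]
  exact norm_add_le _ _

lemma PosSemidef.dotProduct_mulVec_mul_self_le (hM : M.PosSemidef) (u v : n → ℝ) :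
    (u ⬝ᵥ M *ᵥ v) * (u ⬝ᵥ M *ᵥ v) ≤ (u ⬝ᵥ M *ᵥ u) * (v ⬝ᵥ M *ᵥ v) := by
  obtain ⟨N, hN⟩ := hM.exists_dotProduct_mulVec_eq_inner
  simp only [hN]
  exact real_inner_mul_inner_self_le _ _

lemma mulVec_nonsing_inv_mulVec {α : Type*} [CommRing α] {A : Matrix n n α} (hA : IsUnit A)
    (w : n → α) : A *ᵥ (A⁻¹ *ᵥ w) = w := by
  rw [mulVec_mulVec, mul_nonsing_inv _ (A.isUnit_iff_isUnit_det.mp hA), one_mulVec]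

-- With `v = A⁻¹ w` and `z = B⁻¹ w`, Cauchy–Schwarz for `B` gives
-- `(wᵀA⁻¹w)² = (zᵀBv)² ≤ (zᵀBz)(vᵀBv) ≤ c² (wᵀB⁻¹w)(wᵀA⁻¹w)`.
lemma PosDef.sqrt_dotProduct_inv_mulVec_le {A B : Matrix n n ℝ} (hA : A.PosDef) (hB : B.PosDef)
    {c : ℝ} (hc : 0 ≤ c) (hBA : ∀ v, v ⬝ᵥ B *ᵥ v ≤ c ^ 2 * (v ⬝ᵥ A *ᵥ v)) (w : n → ℝ) :
    √(w ⬝ᵥ A⁻¹ *ᵥ w) ≤ c * √(w ⬝ᵥ B⁻¹ *ᵥ w) := by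
  set v := A⁻¹ *ᵥ w
  set z := B⁻¹ *ᵥ w
  have hq : w ⬝ᵥ v = z ⬝ᵥ B *ᵥ v := by
    rw [dotProduct_mulVec z, ← mulVec_transpose, (isHermitian_iff_isSymm.mp hB.isHermitian).eq,
      mulVec_nonsing_inv_mulVec hB.isUnit]
  have hp : w ⬝ᵥ z = z ⬝ᵥ B *ᵥ z := by rw [mulVec_nonsing_inv_mulVec hB.isUnit, dotProduct_comm]
  have hvA : v ⬝ᵥ A *ᵥ v = w ⬝ᵥ v := by rw [mulVec_nonsing_inv_mulVec hA.isUnit, dotProduct_comm]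
  have hq0 : 0 ≤ w ⬝ᵥ v := by simpa using hA.inv.posSemidef.dotProduct_mulVec_nonneg w
  have hp0 : 0 ≤ w ⬝ᵥ z := by simpa using hB.inv.posSemidef.dotProduct_mulVec_nonneg w
  have hcs : (w ⬝ᵥ v) * (w ⬝ᵥ v) ≤ (w ⬝ᵥ z) * (c ^ 2 * (w ⬝ᵥ v)) := by
    calc (w ⬝ᵥ v) * (w ⬝ᵥ v) ≤ (z ⬝ᵥ B *ᵥ z) * (v ⬝ᵥ B *ᵥ v) := by
          rw [hq]; exact hB.posSemidef.dotProduct_mulVec_mul_self_le z v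
      _ ≤ (w ⬝ᵥ z) * (c ^ 2 * (w ⬝ᵥ v)) := by
          rw [← hp, ← hvA]; exact mul_le_mul_of_nonneg_left (hBA v) hp0
  have hqp : w ⬝ᵥ v ≤ c ^ 2 * (w ⬝ᵥ z) := by
    rcases hq0.eq_or_lt with h | h
    · rw [← h]; positivity
    · nlinarith
  calc √(w ⬝ᵥ v) ≤ √(c ^ 2 * (w ⬝ᵥ z)) := Real.sqrt_le_sqrt hqp
    _ = c * √(w ⬝ᵥ z) := by rw [Real.sqrt_mul' _ hp0, Real.sqrt_sq hc]

end Matrix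

section RegularizedGram

variable {ι n : Type*} [Fintype n]

-- `Φ v` for the matrix `Φ` with rows `√λ eₖ` and `x j` (`j ∈ s`), so that
-- `regularizedGram lam s x = Φᵀ Φ`.
noncomputable def gramFeature (lam : ℝ) (s : Finset ι) (x : ι → n → ℝ) (v : n → ℝ) :
    EuclideanSpace ℝ (n ⊕ s) :=
  WithLp.toLp 2 (Sum.elim (√lam • v) fun j => x j ⬝ᵥ v)

lemma norm_gramFeature_sub_le (lam : ℝ) (s : Finset ι) (x y : ι → n → ℝ) (v : n → ℝ) :
    ‖gramFeature lam s y v - gramFeature lam s x v‖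
      ≤ √(∑ j ∈ s, ∑ c, (x j c - y j c) ^ 2) * √(v ⬝ᵥ v) := by
  rw [← Real.sqrt_mul (by positivity),
    ← Real.sqrt_sq (norm_nonneg _), EuclideanSpace.norm_sq_eq, Fintype.sum_sum_type]
  apply Real.sqrt_le_sqrt
  simp only [gramFeature, WithLp.ofLp_sub, Pi.sub_apply, Sum.elim_inl, Sum.elim_inr, sub_self,
    norm_zero, ne_eq, OfNat.ofNat_ne_zero, not_false_eq_true, zero_pow, Finset.sum_const_zero,
    zero_add, Real.norm_eq_abs, sq_abs]
  rw [Finset.sum_mul, ← Finset.sum_coe_sort s]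
  gcongr with j
  have hcs := Finset.sum_mul_sq_le_sq_mul_sq Finset.univ (fun c => x j c - y j c) v
  convert hcs using 1
  · rw [← sub_dotProduct, ← neg_sq, ← neg_dotProduct, neg_sub]
    rfl
  · simp [dotProduct, sq]

variable [DecidableEq n]

noncomputable def regularizedGram (lam : ℝ) (s : Finset ι) (x : ι → n → ℝ) : Matrix n n ℝ :=
  lam • 1 + ∑ j ∈ s, vecMulVec (x j) (x j)

lemma dotProduct_regularizedGram_mulVec (lam : ℝ) (s : Finset ι) (x : ι → n → ℝ) (v : n → ℝ) :
    v ⬝ᵥ regularizedGram lam s x *ᵥ v = lam * (v ⬝ᵥ v) + ∑ j ∈ s, (x j ⬝ᵥ v) ^ 2 := by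
  simp [regularizedGram, add_mulVec, smul_mulVec, sum_mulVec, vecMulVec_mulVec, sum_dotProduct, sq,
    dotProduct_comm v]

lemma posDef_regularizedGram {lam : ℝ} (hlam : 0 < lam) (s : Finset ι) (x : ι → n → ℝ) :
    (regularizedGram lam s x).PosDef :=
  (PosDef.one.smul hlam).add_posSemidef <|
    posSemidef_sum s fun j _ => by simpa using posSemidef_vecMulVec_self_star (x j)

lemma norm_gramFeature_sq {lam : ℝ} (hlam : 0 ≤ lam) (s : Finset ι) (x : ι → n → ℝ) (v : n → ℝ) :
    ‖gramFeature lam s x v‖ ^ 2 = v ⬝ᵥ regularizedGram lam s x *ᵥ v := by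
  rw [EuclideanSpace.norm_sq_eq, Fintype.sum_sum_type, dotProduct_regularizedGram_mulVec]
  simp only [gramFeature, Real.norm_eq_abs, sq_abs, Sum.elim_inl, Sum.elim_inr, Pi.smul_apply,
    smul_eq_mul, mul_pow, Real.sq_sqrt hlam, Finset.sum_coe_sort s (fun j => (x j ⬝ᵥ v) ^ 2)]
  simp [dotProduct, Finset.mul_sum, sq]

lemma mul_dotProduct_self_le_dotProduct_regularizedGram_mulVec (lam : ℝ) (s : Finset ι)
    (x : ι → n → ℝ) (v : n → ℝ) :
    lam * (v ⬝ᵥ v) ≤ v ⬝ᵥ regularizedGram lam s x *ᵥ v := by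
  rw [dotProduct_regularizedGram_mulVec]
  exact le_add_of_nonneg_right (Finset.sum_nonneg fun _ _ => sq_nonneg _)

lemma sqrt_dotProduct_regularizedGram_mulVec_le {lam : ℝ} (hlam : 0 < lam) (s : Finset ι)
    (x y : ι → n → ℝ) (v : n → ℝ) :
    √(v ⬝ᵥ regularizedGram lam s y *ᵥ v)
      ≤ (1 + √(∑ j ∈ s, ∑ c, (x j c - y j c) ^ 2) / √lam)
        * √(v ⬝ᵥ regularizedGram lam s x *ᵥ v) := by
  set D := ∑ j ∈ s, ∑ c, (x j c - y j c) ^ 2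
  have hnorm (z : ι → n → ℝ) :
      √(v ⬝ᵥ regularizedGram lam s z *ᵥ v) = ‖gramFeature lam s z v‖ := by
    rw [← norm_gramFeature_sq hlam.le, Real.sqrt_sq (norm_nonneg _)]
  have hv : √lam * √(v ⬝ᵥ v) ≤ ‖gramFeature lam s x v‖ := by
    rw [← hnorm, ← Real.sqrt_mul hlam.le]
    exact Real.sqrt_le_sqrt (mul_dotProduct_self_le_dotProduct_regularizedGram_mulVec lam s x v)
  rw [hnorm, hnorm]
  calc ‖gramFeature lam s y v‖
      ≤ ‖gramFeature lam s x v‖ + ‖gramFeature lam s y v - gramFeature lam s x v‖ :=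
        norm_le_norm_add_norm_sub' _ _
    _ ≤ ‖gramFeature lam s x v‖ + √D * √(v ⬝ᵥ v) := by
        gcongr
        exact norm_gramFeature_sub_le lam s x y v
    _ ≤ (1 + √D / √lam) * ‖gramFeature lam s x v‖ := by
        rw [show √D * √(v ⬝ᵥ v) = √D / √lam * (√lam * √(v ⬝ᵥ v)) by field_simp, add_mul, one_mul]
        gcongr

lemma sqrt_dotProduct_inv_regularizedGram_mulVec_le {lam : ℝ} (hlam : 0 < lam) (s : Finset ι)
    (x : ι → n → ℝ) (w : n → ℝ) :
    √(w ⬝ᵥ (regularizedGram lam s x)⁻¹ *ᵥ w) ≤ 1 / √lam * √(w ⬝ᵥ w) := by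
  have hform (v : n → ℝ) :
      v ⬝ᵥ 1 *ᵥ v ≤ (1 / √lam) ^ 2 * (v ⬝ᵥ regularizedGram lam s x *ᵥ v) := by
    rw [one_mulVec, div_pow, one_pow, Real.sq_sqrt hlam.le, one_div_mul_eq_div, le_div_iff₀ hlam,
      mul_comm]
    exact mul_dotProduct_self_le_dotProduct_regularizedGram_mulVec lam s x v
  simpa using (posDef_regularizedGram hlam s x).sqrt_dotProduct_inv_mulVec_le PosDef.one
    (by positivity) hform w

lemma sqrt_dotProduct_inv_regularizedGram_mulVec_le_mul {lam : ℝ} (hlam : 0 < lam)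
    (s : Finset ι) (x y : ι → n → ℝ) (w : n → ℝ) :
    √(w ⬝ᵥ (regularizedGram lam s x)⁻¹ *ᵥ w)
      ≤ (1 + √(∑ j ∈ s, ∑ c, (x j c - y j c) ^ 2) / √lam)
        * √(w ⬝ᵥ (regularizedGram lam s y)⁻¹ *ᵥ w) := by
  refine (posDef_regularizedGram hlam s x).sqrt_dotProduct_inv_mulVec_le
    (posDef_regularizedGram hlam s y) (by positivity) (fun v => ?_) w
  have hx : 0 ≤ v ⬝ᵥ regularizedGram lam s x *ᵥ v := by
    simpa using (posDef_regularizedGram hlam s x).posSemidef.dotProduct_mulVec_nonneg v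
  rw [← Real.sqrt_le_sqrt_iff (by positivity), Real.sqrt_mul' _ hx, Real.sqrt_sq (by positivity)]
  exact sqrt_dotProduct_regularizedGram_mulVec_le hlam s x y v

end RegularizedGram

lemma one_le_finrank_span_range {K V ι : Type*} [Field K] [AddCommGroup V] [Module K V]
    [FiniteDimensional K V] {x : ι → V} {i : ι} (hi : x i ≠ 0) :
    1 ≤ Module.finrank K (Submodule.span K (Set.range x)) :=
  Submodule.one_le_finrank_iff.mpr fun h =>
    hi <| (Submodule.mem_bot K).mp (h ▸ Submodule.subset_span ⟨i, rfl⟩)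

theorem transfer_vector_score_general
    {d r : ℕ} {I : Type*} (J : Finset I)
    (lam : ℝ) (hlam : 0 < lam)
    (x y : I → (Fin d → ℝ))
    (hx : Module.finrank ℝ (Submodule.span ℝ (Set.range x)) ≤ r)
    (A B : Matrix (Fin d) (Fin d) ℝ)
    (hA : A = lam • (1 : Matrix (Fin d) (Fin d) ℝ) + ∑ j ∈ J, vecMulVec (x j) (x j))
    (hB : B = lam • (1 : Matrix (Fin d) (Fin d) ℝ) + ∑ j ∈ J, vecMulVec (y j) (y j)) :
    ∀ i : I,
      Real.sqrt (x i ⬝ᵥ A⁻¹.mulVec (x i))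
        ≤ (1 / Real.sqrt lam) * Real.sqrt (∑ c, (x i c - y i c) ^ 2)
          + (1 + (2 * Real.sqrt r / Real.sqrt lam)
                * Real.sqrt (∑ j ∈ J, ∑ c, (x j c - y j c) ^ 2))
            * Real.sqrt (y i ⬝ᵥ B⁻¹.mulVec (y i)) := by
  intro i
  by_cases hxi : x i = 0
  · simp only [hxi, zero_dotProduct, Real.sqrt_zero]
    positivity
  have hr : (1 : ℝ) ≤ √r :=
    Real.one_le_sqrt.mpr (by exact_mod_cast (one_le_finrank_span_range hxi).trans hx)
  obtain rfl : A = regularizedGram lam J x := hA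
  obtain rfl : B = regularizedGram lam J y := hB
  set D := ∑ j ∈ J, ∑ c, (x j c - y j c) ^ 2
  have hxy : (x i - y i) ⬝ᵥ (x i - y i) = ∑ c, (x i c - y i c) ^ 2 := by
    simp [dotProduct, sq]
  calc √(x i ⬝ᵥ (regularizedGram lam J x)⁻¹ *ᵥ x i)
      ≤ √((x i - y i) ⬝ᵥ (regularizedGram lam J x)⁻¹ *ᵥ (x i - y i))
        + √(y i ⬝ᵥ (regularizedGram lam J x)⁻¹ *ᵥ y i) := by
        simpa using (posDef_regularizedGram hlam J x).inv.posSemidef.sqrt_dotProduct_mulVec_add_le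
          (x i - y i) (y i)
    _ ≤ 1 / √lam * √(∑ c, (x i c - y i c) ^ 2)
        + (1 + √D / √lam) * √(y i ⬝ᵥ (regularizedGram lam J y)⁻¹ *ᵥ y i) := by
        rw [← hxy]
        gcongr
        · exact sqrt_dotProduct_inv_regularizedGram_mulVec_le hlam J x _
        · exact sqrt_dotProduct_inv_regularizedGram_mulVec_le_mul hlam J x y _
    _ ≤ _ := by
        have hconst : √D / √lam ≤ 2 * √r / √lam * √D := by
          rw [div_mul_eq_mul_div]
          gcongr
          exact le_mul_of_one_le_left (Real.sqrt_nonneg D) (by linarith)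
        gcongr

/-- transfer of elliptical-norm scores between two vector sequences.
With `A = λ I + ∑_{j∈J} x_j x_jᵀ` and `B = λ I + ∑_{j∈J} y_j y_jᵀ`, both spans of
dimension at most `r`, for every `i`:
`‖x_i‖_{A⁻¹} ≤ (1/√λ)‖x_i − y_i‖₂ + (1 + (2√r/√λ)√(∑_{j∈J}‖x_j − y_j‖₂²))‖y_i‖_{B⁻¹}`. -/
theorem transfer_vector_score
    {d r : ℕ} {I : Type*} [Fintype I] (J : Finset I)
    (lam : ℝ) (hlam : 0 < lam)
    (x y : I → (Fin d → ℝ))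
    (hx : Module.finrank ℝ (Submodule.span ℝ (Set.range x)) ≤ r)
    (hy : Module.finrank ℝ (Submodule.span ℝ (Set.range y)) ≤ r)
    (A B : Matrix (Fin d) (Fin d) ℝ)
    (hA : A = lam • (1 : Matrix (Fin d) (Fin d) ℝ) + ∑ j ∈ J, vecMulVec (x j) (x j))
    (hB : B = lam • (1 : Matrix (Fin d) (Fin d) ℝ) + ∑ j ∈ J, vecMulVec (y j) (y j)) :
    ∀ i : I,
      Real.sqrt (x i ⬝ᵥ A⁻¹.mulVec (x i))
        ≤ (1 / Real.sqrt lam) * Real.sqrt (∑ c, (x i c - y i c) ^ 2)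
          + (1 + (2 * Real.sqrt r / Real.sqrt lam)
                * Real.sqrt (∑ j ∈ J, ∑ c, (x j c - y j c) ^ 2))
            * Real.sqrt (y i ⬝ᵥ B⁻¹.mulVec (y i)) :=
  transfer_vector_score_general J lam hlam x y hx A B hA hB
end

section
/- Let λ > 0, let J be a finite index set, and let (x_j)_{j∈J} be vectors in ℝ^d whose linear span has dimension at most r. Let A = λ·I_d + ∑_{j∈J} x_j x_jᵀ. Then ∑_{j∈J} x_jᵀ A⁻¹ x_j ≤ r. -/
/-!
With `B = ∑ⱼ xⱼ xⱼᵀ`, the sum is `tr ((λ I + B)⁻¹ B)`. In an eigenbasis of the positive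
semidefinite matrix `B`, with eigenvalues `μᵢ ≥ 0`, this is `∑ᵢ μᵢ / (λ + μᵢ)`: each term is
`0` when `μᵢ = 0` and less than `1` otherwise, so the sum is at most the rank of `B`, whose range
lies in the span of the `xⱼ`.
-/

open Matrix

namespace Matrix

variable {n : Type*} [Fintype n]

theorem trace_mul_sum_vecMulVec {R J : Type*} [CommSemiring R] [Fintype J]
    (M : Matrix n n R) (x y : J → n → R) :
    trace (M * ∑ j, vecMulVec (x j) (y j)) = ∑ j, y j ⬝ᵥ M *ᵥ x j := by
  simp only [Finset.mul_sum, trace_sum, mul_vecMulVec, trace_vecMulVec, dotProduct_comm]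

theorem rank_sum_vecMulVec_le_finrank_span {K J : Type*} [Field K] [Fintype J]
    (x y : J → n → K) :
    (∑ j, vecMulVec (x j) (y j)).rank ≤ Module.finrank K (Submodule.span K (Set.range x)) := by
  refine Submodule.finrank_mono ?_
  rintro _ ⟨v, rfl⟩
  rw [mulVecLin_apply, sum_mulVec]
  refine Submodule.sum_mem _ fun j _ => ?_
  rw [vecMulVec_mulVec, op_smul_eq_smul]
  exact Submodule.smul_mem _ _ (Submodule.subset_span (Set.mem_range_self j))

theorem posSemidef_sum_vecMulVec_self {J : Type*} [Fintype J] (x : J → n → ℝ) :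
    (∑ j, vecMulVec (x j) (x j)).PosSemidef :=
  posSemidef_sum _ fun j _ => by simpa using posSemidef_vecMulVec_self_star (x j)

variable [DecidableEq n]

theorem IsHermitian.trace_cfc {B : Matrix n n ℝ} (hB : B.IsHermitian) (f : ℝ → ℝ) :
    trace (cfc f B) = ∑ i, f (hB.eigenvalues i) := by
  rw [hB.cfc_eq, IsHermitian.cfc, Unitary.conjStarAlgAut_apply, trace_mul_cycle,
    Unitary.coe_star_mul_self, one_mul, trace_diagonal]
  rfl

theorem PosSemidef.inv_smul_one_add_mul_eq_cfc {B : Matrix n n ℝ} (hB : B.PosSemidef)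
    {c : ℝ} (hc : 0 < c) :
    (c • 1 + B)⁻¹ * B = cfc (fun t => t / (c + t)) B := by
  have hunit : IsUnit (c • 1 + B).det :=
    (isUnit_iff_isUnit_det _).mp ((PosDef.one.smul hc).add_posSemidef hB).isUnit
  have hB_sa : IsSelfAdjoint B := hB.isHermitian
  have hspec : Set.EqOn (fun t => (c + t) * (t / (c + t))) (fun t => t) (spectrum ℝ B) := by
    rw [hB.isHermitian.spectrum_real_eq_range_eigenvalues]
    rintro _ ⟨i, rfl⟩
    have := hB.eigenvalues_nonneg i
    field_simp
  have hfactor : (c • 1 + B) * cfc (fun t => t / (c + t)) B = B :=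
    calc (c • 1 + B) * cfc (fun t => t / (c + t)) B
        = cfc (fun t => c + t) B * cfc (fun t => t / (c + t)) B := by
          rw [cfc_const_add c _ B, cfc_id' ℝ B, Algebra.algebraMap_eq_smul_one]
      _ = cfc (fun t => (c + t) * (t / (c + t))) B := (cfc_mul _ _ B).symm
      _ = B := by rw [cfc_congr hspec, cfc_id' ℝ B]
  rw [← nonsing_inv_mul_cancel_left _ (cfc (fun t => t / (c + t)) B) hunit, hfactor]

theorem PosSemidef.trace_inv_smul_one_add_mul_le_rank {B : Matrix n n ℝ} (hB : B.PosSemidef)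
    {c : ℝ} (hc : 0 < c) :
    trace ((c • 1 + B)⁻¹ * B) ≤ B.rank := by
  rw [hB.inv_smul_one_add_mul_eq_cfc hc, hB.isHermitian.trace_cfc,
    hB.isHermitian.rank_eq_card_non_zero_eigs, Fintype.card_subtype, Finset.card_filter,
    Nat.cast_sum]
  refine Finset.sum_le_sum fun i _ => ?_
  have := hB.eigenvalues_nonneg i
  split_ifs with h
  · simp only [Nat.cast_one]
    exact div_le_one_of_le₀ (by linarith) (by linarith)
  · simp [not_not.mp h]

end Matrix

/-- With `A = λ I + ∑_{j∈J} x_j x_jᵀ` and the span of the `x_j` of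
dimension at most `r`, we have `∑_{j∈J} x_jᵀ A⁻¹ x_j ≤ r`. -/
theorem sum_quadratic_inv_le_rank
    {d r : ℕ} {J : Type*} [Fintype J]
    (lam : ℝ) (hlam : 0 < lam)
    (x : J → (Fin d → ℝ))
    (hx : Module.finrank ℝ (Submodule.span ℝ (Set.range x)) ≤ r)
    (A : Matrix (Fin d) (Fin d) ℝ)
    (hA : A = lam • (1 : Matrix (Fin d) (Fin d) ℝ) + ∑ j, vecMulVec (x j) (x j)) :
    ∑ j, x j ⬝ᵥ A⁻¹.mulVec (x j) ≤ (r : ℝ) := by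
  calc ∑ j, x j ⬝ᵥ A⁻¹.mulVec (x j) = trace (A⁻¹ * ∑ j, vecMulVec (x j) (x j)) :=
        (trace_mul_sum_vecMulVec _ _ _).symm
    _ ≤ (∑ j, vecMulVec (x j) (x j)).rank := by
        rw [hA]
        exact (posSemidef_sum_vecMulVec_self x).trace_inv_smul_one_add_mul_le_rank hlam
    _ ≤ r := by exact_mod_cast (rank_sum_vecMulVec_le_finrank_span x x).trans hx
end

section
/- Let x_1, …, x_K be vectors in ℝ^d with ‖x_k‖₂ ≤ 1 for all k and with the linear span of {x_1, …, x_K} of dimension at most r. Let λ > 0 and B > 0 be real numbers, and for each k ∈ {1, …, K} set U_k = λ·I_d + ∑_{t<k} x_t x_tᵀ. Then ∑_{k=1}^{K} min{‖x_k‖²_{U_k⁻¹}, B} ≤ (1 + B)·r·log(1 + K/λ). -/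
/-
Write `u_k = ‖x_k‖²_{U_k⁻¹}`. By the matrix determinant lemma `det U_{k+1} = det U_k · (1 + u_k)`,
so `∑ log (1 + u_k) = log det (λ I + G) - d log λ` with `G = ∑ x_t x_tᵀ`. In the eigenbasis of
`G` this is `∑ log (1 + μ_i / λ)`, where only the `rank G ≤ r` nonzero eigenvalues contribute
and each is at most `trace G ≤ K`. Finally `min u B ≤ (1 + B) log (1 + u)` for `u ≥ 0`.
-/

open Matrix Finset

theorem Real.min_le_one_add_mul_log_one_add {u B : ℝ} (hu : 0 ≤ u) (hB : 0 ≤ B) :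
    min u B ≤ (1 + B) * Real.log (1 + u) := by
  have hself : ∀ a : ℝ, 0 ≤ a → a ≤ (1 + a) * Real.log (1 + a) := fun a ha => by
    have h := Real.one_sub_inv_le_log_of_pos (show 0 < 1 + a by linarith)
    have : 1 - (1 + a)⁻¹ = a / (1 + a) := by field_simp; ring
    rw [this, div_le_iff₀ (by linarith)] at h
    linarith
  rcases le_total u B with h | h
  · rw [min_eq_left h]
    nlinarith [hself u hu, Real.log_nonneg (show 1 ≤ 1 + u by linarith)]
  · rw [min_eq_right h]
    nlinarith [hself B hB,
      Real.log_le_log (show 0 < 1 + B by linarith) (show 1 + B ≤ 1 + u by linarith)]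

namespace Matrix

variable {n : Type*} [Fintype n]

theorem rank_sum_vecMulVec_le {m K ι : Type*} [Fintype m] [Field K] (s : Finset ι)
    (u : ι → m → K) (w : ι → n → K) :
    (∑ t ∈ s, vecMulVec (u t) (w t)).rank
      ≤ Module.finrank K (Submodule.span K (Set.range u)) := by
  refine Submodule.finrank_mono ?_
  rintro _ ⟨y, rfl⟩
  rw [mulVecLin_apply, sum_mulVec]
  refine Submodule.sum_mem _ fun t _ => ?_
  rw [vecMulVec_mulVec, op_smul_eq_smul]
  exact Submodule.smul_mem _ _ (Submodule.subset_span (Set.mem_range_self t))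

theorem posSemidef_sum_vecMulVec_self_s5 {ι : Type*} (s : Finset ι) (v : ι → n → ℝ) :
    (∑ t ∈ s, vecMulVec (v t) (v t)).PosSemidef :=
  posSemidef_sum s fun t _ => by simpa using posSemidef_vecMulVec_self_star (v t)

variable [DecidableEq n]

theorem posSemidef_smul_one_add_sum_vecMulVec_self {ι : Type*} {c : ℝ} (hc : 0 ≤ c)
    (s : Finset ι) (v : ι → n → ℝ) : (c • 1 + ∑ t ∈ s, vecMulVec (v t) (v t)).PosSemidef :=
  (PosSemidef.one.smul hc).add (posSemidef_sum_vecMulVec_self_s5 s v)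

theorem PosSemidef.dotProduct_inv_mulVec_nonneg {A : Matrix n n ℝ} (hA : A.PosSemidef)
    (v : n → ℝ) : 0 ≤ v ⬝ᵥ A⁻¹ *ᵥ v := by
  simpa using hA.inv.dotProduct_mulVec_nonneg v

theorem det_add_vecMulVec {A : Matrix n n ℝ} (hA : IsUnit A.det) (u v : n → ℝ) :
    (A + vecMulVec u v).det = A.det * (1 + v ⬝ᵥ A⁻¹ *ᵥ u) := by
  rw [vecMulVec_eq Unit, det_add_replicateCol_mul_replicateRow hA]
  congr 1
  rw [det_unique, add_apply, one_apply_eq, ← replicateRow_vecMul,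
    replicateRow_mul_replicateCol_apply, ← dotProduct_mulVec]

theorem det_add_sum_vecMulVec_self {ι : Type*} [LinearOrder ι] {A : Matrix n n ℝ}
    (hA : A.PosDef) (v : ι → n → ℝ) (s : Finset ι) :
    (A + ∑ t ∈ s, vecMulVec (v t) (v t)).det
      = A.det * ∏ k ∈ s,
          (1 + v k ⬝ᵥ (A + ∑ t ∈ s with t < k, vecMulVec (v t) (v t))⁻¹ *ᵥ v k) := by
  induction s using Finset.induction_on_max with
  | empty => simp
  | insert a s ha ih =>
    have hpd : (A + ∑ t ∈ s, vecMulVec (v t) (v t)).PosDef :=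
      hA.add_posSemidef (posSemidef_sum_vecMulVec_self_s5 s v)
    have hnot : a ∉ s := fun h => lt_irrefl a (ha a h)
    have hfilter_a : (insert a s).filter (· < a) = s := by
      rw [filter_insert, if_neg (lt_irrefl a), filter_true_of_mem ha]
    have hfilter_k : ∀ k ∈ s, (insert a s).filter (· < k) = s.filter (· < k) := fun k hk => by
      rw [filter_insert, if_neg (ha k hk).not_gt]
    rw [sum_insert hnot, ← add_assoc, add_right_comm, det_add_vecMulVec hpd.det_pos.ne'.isUnit,
      prod_insert hnot, hfilter_a, prod_congr rfl fun k hk => by rw [hfilter_k k hk], ih]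
    ring

theorem IsHermitian.det_smul_one_add {A : Matrix n n ℝ} (hA : A.IsHermitian) (c : ℝ) :
    (c • 1 + A).det = ∏ i, (c + hA.eigenvalues i) := by
  have hconj : c • 1 + A
      = Unitary.conjStarAlgAut ℝ _ hA.eigenvectorUnitary (c • 1 + diagonal hA.eigenvalues) := by
    rw [map_add, map_smul, map_one]
    conv_lhs => rw [hA.spectral_theorem]
    simp
  rw [hconj, Unitary.conjStarAlgAut_apply, det_mul_right_comm,
    Unitary.mul_star_self_of_mem hA.eigenvectorUnitary.2, one_mul, smul_one_eq_diagonal,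
    diagonal_add, det_diagonal]

theorem PosSemidef.log_det_smul_one_add_le {A : Matrix n n ℝ} (hA : A.PosSemidef) {c : ℝ}
    (hc : 0 < c) :
    Real.log (c • 1 + A).det
      ≤ Fintype.card n * Real.log c + A.rank * Real.log (1 + A.trace / c) := by
  set μ := hA.isHermitian.eigenvalues
  have hμ : ∀ i, 0 ≤ μ i := hA.eigenvalues_nonneg
  have hμ_le_trace : ∀ i, μ i ≤ A.trace := fun i => by
    rw [hA.isHermitian.trace_eq_sum_eigenvalues]
    exact single_le_sum (fun j _ => by simpa using hμ j) (mem_univ i)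
  have hdet : (c • 1 + A).det = c ^ Fintype.card n * ∏ i, (1 + μ i / c) := by
    rw [hA.isHermitian.det_smul_one_add, ← card_univ, ← prod_const, ← prod_mul_distrib]
    exact prod_congr rfl fun i _ => by simp only [μ]; field_simp
  have hpos : ∀ i, 0 < 1 + μ i / c := fun i => by have := hμ i; positivity
  rw [hdet, Real.log_mul (by positivity) (prod_ne_zero_iff.mpr fun i _ => (hpos i).ne'),
    Real.log_pow, Real.log_prod fun i _ => (hpos i).ne']
  gcongr
  calc ∑ i, Real.log (1 + μ i / c)
      = ∑ i with μ i ≠ 0, Real.log (1 + μ i / c) :=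
        (sum_filter_of_ne fun i _ h => by contrapose! h; simp [h]).symm
    _ ≤ #{i | μ i ≠ 0} • Real.log (1 + A.trace / c) :=
        sum_le_card_nsmul _ _ _ fun i _ =>
          Real.log_le_log (hpos i) (by gcongr; exact hμ_le_trace i)
    _ = A.rank * Real.log (1 + A.trace / c) := by
        rw [nsmul_eq_mul, hA.isHermitian.rank_eq_card_non_zero_eigs, Fintype.card_subtype]

theorem sum_log_one_add_dotProduct_inv_mulVec_le {ι : Type*} [Fintype ι] [LinearOrder ι]
    {c : ℝ} (hc : 0 < c) (v : ι → n → ℝ) :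
    ∑ k, Real.log (1 + v k ⬝ᵥ (c • 1 + ∑ t with t < k, vecMulVec (v t) (v t))⁻¹ *ᵥ v k)
      ≤ Module.finrank ℝ (Submodule.span ℝ (Set.range v))
          * Real.log (1 + (∑ t, v t ⬝ᵥ v t) / c) := by
  set G := ∑ t, vecMulVec (v t) (v t)
  have hG : G.PosSemidef := posSemidef_sum_vecMulVec_self_s5 univ v
  have hpos :
      ∀ k, 1 + v k ⬝ᵥ (c • 1 + ∑ t with t < k, vecMulVec (v t) (v t))⁻¹ *ᵥ v k ≠ 0 := fun k => by
    have := (posSemidef_smul_one_add_sum_vecMulVec_self hc.le {t | t < k} v)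
      |>.dotProduct_inv_mulVec_nonneg (v k)
    exact ne_of_gt (by linarith)
  have h := hG.log_det_smul_one_add_le hc
  rw [det_add_sum_vecMulVec_self (PosDef.one.smul hc), det_smul, det_one, mul_one,
    Real.log_mul (by positivity) (prod_ne_zero_iff.mpr fun k _ => hpos k), Real.log_pow,
    Real.log_prod fun k _ => hpos k] at h
  have htrace : G.trace = ∑ t, v t ⬝ᵥ v t := by simp [G, trace_sum]
  have htrace_nonneg : 0 ≤ G.trace / c := div_nonneg hG.trace_nonneg hc.le
  calc _ ≤ G.rank * Real.log (1 + G.trace / c) := by linarith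
    _ ≤ _ := by
      rw [← htrace]
      gcongr
      · exact Real.log_nonneg (by linarith)
      · exact_mod_cast rank_sum_vecMulVec_le univ v v

end Matrix

/-- elliptical potential lemma, squared version: for unit-bounded
vectors `x_1, …, x_K` of span dimension at most `r`, with
`U_k = λ I + ∑_{t<k} x_t x_tᵀ`,
`∑_{k} min{‖x_k‖²_{U_k⁻¹}, B} ≤ (1 + B) r log(1 + K/λ)`. -/
theorem elliptical_potential_sq
    {d r K : ℕ} (lam B : ℝ) (hlam : 0 < lam) (hB : 0 < B)
    (x : Fin K → (Fin d → ℝ))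
    (hnorm : ∀ k, Real.sqrt (∑ c, (x k c) ^ 2) ≤ 1)
    (hx : Module.finrank ℝ (Submodule.span ℝ (Set.range x)) ≤ r)
    (U : Fin K → Matrix (Fin d) (Fin d) ℝ)
    (hU : ∀ k, U k = lam • (1 : Matrix (Fin d) (Fin d) ℝ)
        + ∑ t ∈ Finset.univ.filter (fun t => t < k), vecMulVec (x t) (x t)) :
    ∑ k, min (x k ⬝ᵥ (U k)⁻¹.mulVec (x k)) B
      ≤ (1 + B) * r * Real.log (1 + K / lam) := by
  have hquad : ∀ k, 0 ≤ x k ⬝ᵥ (U k)⁻¹ *ᵥ x k := fun k => by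
    rw [hU k]
    exact (posSemidef_smul_one_add_sum_vecMulVec_self hlam.le _ x)
      |>.dotProduct_inv_mulVec_nonneg (x k)
  have hsq : ∑ k, x k ⬝ᵥ x k ≤ K := by
    simpa using sum_le_sum fun k (_ : k ∈ univ) =>
      (show x k ⬝ᵥ x k ≤ 1 by simpa [dotProduct, sq] using hnorm k)
  have hlog : ∑ k, Real.log (1 + x k ⬝ᵥ (U k)⁻¹ *ᵥ x k) ≤ r * Real.log (1 + K / lam) := by
    simp_rw [hU]
    refine (sum_log_one_add_dotProduct_inv_mulVec_le hlam x).trans ?_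
    have : 0 ≤ (∑ k, x k ⬝ᵥ x k) / lam := div_nonneg (sum_nonneg fun k _ => by
      simpa using dotProduct_self_star_nonneg (x k)) hlam.le
    gcongr
    exact Real.log_nonneg (by linarith)
  calc ∑ k, min (x k ⬝ᵥ (U k)⁻¹ *ᵥ x k) B
      ≤ ∑ k, (1 + B) * Real.log (1 + x k ⬝ᵥ (U k)⁻¹ *ᵥ x k) :=
        sum_le_sum fun k _ => Real.min_le_one_add_mul_log_one_add (hquad k) hB.le
    _ ≤ (1 + B) * r * Real.log (1 + K / lam) := by
      rw [← mul_sum, mul_assoc]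
      gcongr
end

section
/- Let X and Y be finite sets and let p, q : X × Y → [0,∞) be nonnegative measures; write p(x) = ∑_{y∈Y} p(x,y) and q(x) = ∑_{y∈Y} q(x,y) for the marginals. Fix x₀ ∈ X with p(x₀) > 0 and q(x₀) > 0. Then the total variation distance between the conditional distributions at x₀ satisfies ∑_{y∈Y} | p(x₀,y)/p(x₀) − q(x₀,y)/q(x₀) | ≤ (2 / max{p(x₀), q(x₀)}) · ∑_{x∈X} ∑_{y∈Y} | p(x,y) − q(x,y) |. -/
lemma conditional_tv_aux {Y : Type*} [Fintype Y] (p q : Y → ℝ)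
    (hp : ∀ y, 0 ≤ p y)
    (ha : 0 < ∑ y, p y) (hb : 0 < ∑ y, q y) (hab : ∑ y, p y ≤ ∑ y, q y) :
    ∑ y, |p y / (∑ y', p y') - q y / (∑ y', q y')|
      ≤ 2 * (∑ y, |p y - q y|) / (∑ y, q y) := by
  set a := ∑ y, p y with ha'
  set b := ∑ y, q y with hb'
  have hinv : 1/b ≤ 1/a := one_div_le_one_div_of_le ha hab
  have hS : b - a ≤ ∑ y, |p y - q y| := by
    have h1 : |∑ y, (q y - p y)| ≤ ∑ y, |q y - p y| :=
      Finset.abs_sum_le_sum_abs _ _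
    have h2 : ∑ y, (q y - p y) = b - a := by
      rw [Finset.sum_sub_distrib]
    have h3 : (∑ y, |q y - p y|) = ∑ y, |p y - q y| := by
      simp [abs_sub_comm]
    calc b - a ≤ |b - a| := le_abs_self _
      _ = |∑ y, (q y - p y)| := by rw [h2]
      _ ≤ ∑ y, |q y - p y| := h1
      _ = ∑ y, |p y - q y| := h3
  have step : ∀ y, |p y / a - q y / b| ≤ p y * (1/a - 1/b) + |p y - q y| / b := by
    intro y
    have heq : p y / a - q y / b = p y * (1/a - 1/b) + (p y - q y) / b := by
      field_simp
      ring
    rw [heq]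
    refine (abs_add_le _ _).trans ?_
    rw [abs_of_nonneg (mul_nonneg (hp y) (by linarith)), abs_div, abs_of_pos hb]
  calc ∑ y, |p y / a - q y / b|
      ≤ ∑ y, (p y * (1/a - 1/b) + |p y - q y| / b) :=
        Finset.sum_le_sum fun y _ => step y
    _ = a * (1/a - 1/b) + (∑ y, |p y - q y|) / b := by
        rw [Finset.sum_add_distrib, ← Finset.sum_mul, ← Finset.sum_div]
    _ = (b - a) / b + (∑ y, |p y - q y|) / b := by
        congr 1
        field_simp
    _ ≤ (∑ y, |p y - q y|) / b + (∑ y, |p y - q y|) / b := by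
        gcongr
    _ = 2 * (∑ y, |p y - q y|) / b := by ring

/-- for nonnegative measures `p, q` on `X × Y` with positive marginals at
`x₀`, the TV distance between the conditional distributions at `x₀` is at most
`2 / max{p(x₀), q(x₀)}` times the TV distance between the joint measures. -/
theorem conditional_tv_le_joint_tv
    {X Y : Type*} [Fintype X] [Fintype Y]
    (p q : X → Y → ℝ)
    (hp : ∀ x y, 0 ≤ p x y) (hq : ∀ x y, 0 ≤ q x y)
    (x₀ : X) (hp₀ : 0 < ∑ y, p x₀ y) (hq₀ : 0 < ∑ y, q x₀ y) :
    ∑ y, |p x₀ y / (∑ y', p x₀ y') - q x₀ y / (∑ y', q x₀ y')|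
      ≤ (2 / max (∑ y, p x₀ y) (∑ y, q x₀ y)) * ∑ x, ∑ y, |p x y - q x y| := by
  have hST : ∑ y, |p x₀ y - q x₀ y| ≤ ∑ x, ∑ y, |p x y - q x y| :=
    Finset.single_le_sum (f := fun x => ∑ y, |p x y - q x y|)
      (fun x _ => Finset.sum_nonneg fun y _ => abs_nonneg _) (Finset.mem_univ x₀)
  rcases le_total (∑ y, p x₀ y) (∑ y, q x₀ y) with hab | hab
  · rw [max_eq_right hab]
    calc ∑ y, |p x₀ y / (∑ y', p x₀ y') - q x₀ y / (∑ y', q x₀ y')|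
        ≤ 2 * (∑ y, |p x₀ y - q x₀ y|) / (∑ y, q x₀ y) :=
          conditional_tv_aux (p x₀) (q x₀) (hp x₀) hp₀ hq₀ hab
      _ ≤ 2 * (∑ x, ∑ y, |p x y - q x y|) / (∑ y, q x₀ y) := by gcongr
      _ = (2 / (∑ y, q x₀ y)) * ∑ x, ∑ y, |p x y - q x y| := by ring
  · rw [max_eq_left hab]
    have key := conditional_tv_aux (q x₀) (p x₀) (hq x₀) hq₀ hp₀ hab
    calc ∑ y, |p x₀ y / (∑ y', p x₀ y') - q x₀ y / (∑ y', q x₀ y')|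
        = ∑ y, |q x₀ y / (∑ y', q x₀ y') - p x₀ y / (∑ y', p x₀ y')| := by
          simp [abs_sub_comm]
      _ ≤ 2 * (∑ y, |q x₀ y - p x₀ y|) / (∑ y, p x₀ y) := key
      _ = 2 * (∑ y, |p x₀ y - q x₀ y|) / (∑ y, p x₀ y) := by simp [abs_sub_comm]
      _ ≤ 2 * (∑ x, ∑ y, |p x y - q x y|) / (∑ y, p x₀ y) := by gcongr
      _ = (2 / (∑ y, p x₀ y)) * ∑ x, ∑ y, |p x y - q x y| := by ring
end

section
/- Let X be a finite set, let p and q be probability distributions on X, let ε ≥ 0, and let q̄ : X → [0,∞) be a nonnegative function with ∑_{x∈X} |q(x) − q̄(x)| ≤ ε and ∑_{x∈X} √(q̄(x)·p(x)) > 0. Then D_H²(q, p) ≤ −log(∑_{x∈X} √(q̄(x)·p(x))) + √ε. -/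
open Real Finset

lemma sq_sqrt_sub_le_abs {a b : ℝ} (ha : 0 ≤ a) (hb : 0 ≤ b) :
    (Real.sqrt a - Real.sqrt b) ^ 2 ≤ |a - b| := by
  rcases le_total b a with h | h
  · have hs : Real.sqrt b ≤ Real.sqrt a := Real.sqrt_le_sqrt h
    calc (Real.sqrt a - Real.sqrt b) ^ 2
        = (Real.sqrt a - Real.sqrt b) * (Real.sqrt a - Real.sqrt b) := sq _
      _ ≤ (Real.sqrt a - Real.sqrt b) * (Real.sqrt a + Real.sqrt b) := by
          apply mul_le_mul_of_nonneg_left _ (by linarith)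
          have := Real.sqrt_nonneg b; linarith
      _ = a - b := by
          have h1 := Real.sq_sqrt ha
          have h2 := Real.sq_sqrt hb
          ring_nf; nlinarith [Real.sq_sqrt ha, Real.sq_sqrt hb]
      _ ≤ |a - b| := le_abs_self _
  · have hs : Real.sqrt a ≤ Real.sqrt b := Real.sqrt_le_sqrt h
    calc (Real.sqrt a - Real.sqrt b) ^ 2
        = (Real.sqrt b - Real.sqrt a) * (Real.sqrt b - Real.sqrt a) := by ring
      _ ≤ (Real.sqrt b - Real.sqrt a) * (Real.sqrt b + Real.sqrt a) := by
          apply mul_le_mul_of_nonneg_left _ (by linarith)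
          have := Real.sqrt_nonneg a; linarith
      _ = b - a := by nlinarith [Real.sq_sqrt ha, Real.sq_sqrt hb]
      _ ≤ |a - b| := by rw [abs_sub_comm]; exact le_abs_self _

/-- for probability distributions `p, q` on a finite set `X`, `ε ≥ 0`,
and a nonnegative `q̄` with `∑ x, |q x − q̄ x| ≤ ε` and `∑ x, √(q̄ x · p x) > 0`, the
Hellinger-squared distance satisfies
`D_H²(q, p) ≤ −log(∑ x, √(q̄ x · p x)) + √ε`. -/
theorem hellinger_le_neg_log_bhattacharyya
    {X : Type*} [Fintype X]
    (p q qbar : X → ℝ) (ε : ℝ) (hε : 0 ≤ ε)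
    (hp : ∀ x, 0 ≤ p x) (hpsum : ∑ x, p x = 1)
    (hq : ∀ x, 0 ≤ q x) (hqsum : ∑ x, q x = 1)
    (hqbar : ∀ x, 0 ≤ qbar x)
    (hclose : ∑ x, |q x - qbar x| ≤ ε)
    (hpos : 0 < ∑ x, Real.sqrt (qbar x * p x)) :
    (1 / 2) * ∑ x, (Real.sqrt (q x) - Real.sqrt (p x)) ^ 2
      ≤ -Real.log (∑ x, Real.sqrt (qbar x * p x)) + Real.sqrt ε := by
  set B := ∑ x, Real.sqrt (qbar x * p x) with hB
  set S := ∑ x, Real.sqrt (q x * p x) with hS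
  -- Step 1: expand the Hellinger sum
  have hexp : ∑ x, (Real.sqrt (q x) - Real.sqrt (p x)) ^ 2 = 2 - 2 * S := by
    have : ∀ x : X, (Real.sqrt (q x) - Real.sqrt (p x)) ^ 2
        = q x + p x - 2 * Real.sqrt (q x * p x) := by
      intro x
      rw [Real.sqrt_mul (hq x)]
      nlinarith [Real.sq_sqrt (hq x), Real.sq_sqrt (hp x)]
    rw [Finset.sum_congr rfl (fun x _ => this x)]
    rw [Finset.sum_sub_distrib, Finset.sum_add_distrib, hqsum, hpsum,
      ← Finset.mul_sum]
    ring
  -- Step 2: B ≤ S + √ε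
  have hBS : B ≤ S + Real.sqrt ε := by
    have key : ∑ x, (Real.sqrt (qbar x * p x) - Real.sqrt (q x * p x)) ≤ Real.sqrt ε := by
      have h1 : ∀ x : X, Real.sqrt (qbar x * p x) - Real.sqrt (q x * p x)
          ≤ |Real.sqrt (qbar x) - Real.sqrt (q x)| * Real.sqrt (p x) := by
        intro x
        rw [Real.sqrt_mul (hqbar x), Real.sqrt_mul (hq x)]
        have := abs_nonneg (Real.sqrt (qbar x) - Real.sqrt (q x))
        have h2 : Real.sqrt (qbar x) - Real.sqrt (q x)
            ≤ |Real.sqrt (qbar x) - Real.sqrt (q x)| := le_abs_self _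
        nlinarith [Real.sqrt_nonneg (p x)]
      calc ∑ x, (Real.sqrt (qbar x * p x) - Real.sqrt (q x * p x))
          ≤ ∑ x, |Real.sqrt (qbar x) - Real.sqrt (q x)| * Real.sqrt (p x) :=
            Finset.sum_le_sum (fun x _ => h1 x)
        _ ≤ Real.sqrt ε := by
            have cs2 : (∑ x, |Real.sqrt (qbar x) - Real.sqrt (q x)| * Real.sqrt (p x)) ^ 2
                ≤ (∑ x, |Real.sqrt (qbar x) - Real.sqrt (q x)| ^ 2) * (∑ x, Real.sqrt (p x) ^ 2) :=
              Finset.sum_mul_sq_le_sq_mul_sq Finset.univ _ _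
            have hA : (∑ x, |Real.sqrt (qbar x) - Real.sqrt (q x)| ^ 2) ≤ ε := by
              calc (∑ x, |Real.sqrt (qbar x) - Real.sqrt (q x)| ^ 2)
                  = ∑ x, (Real.sqrt (qbar x) - Real.sqrt (q x)) ^ 2 := by
                    simp [sq_abs]
                _ ≤ ∑ x, |qbar x - q x| := Finset.sum_le_sum
                    (fun x _ => sq_sqrt_sub_le_abs (hqbar x) (hq x))
                _ = ∑ x, |q x - qbar x| := by simp [abs_sub_comm]
                _ ≤ ε := hclose
            have hP : (∑ x, Real.sqrt (p x) ^ 2) = 1 := by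
              rw [Finset.sum_congr rfl (fun x _ => Real.sq_sqrt (hp x)), hpsum]
            have hAnn : 0 ≤ ∑ x, |Real.sqrt (qbar x) - Real.sqrt (q x)| ^ 2 :=
              Finset.sum_nonneg (fun x _ => sq_nonneg _)
            have hsum_nonneg : 0 ≤ ∑ x, |Real.sqrt (qbar x) - Real.sqrt (q x)| * Real.sqrt (p x) :=
              Finset.sum_nonneg (fun x _ => mul_nonneg (abs_nonneg _) (Real.sqrt_nonneg _))
            have : (∑ x, |Real.sqrt (qbar x) - Real.sqrt (q x)| * Real.sqrt (p x)) ^ 2 ≤ ε := by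
              rw [hP] at cs2; linarith
            calc ∑ x, |Real.sqrt (qbar x) - Real.sqrt (q x)| * Real.sqrt (p x)
                = Real.sqrt ((∑ x, |Real.sqrt (qbar x) - Real.sqrt (q x)| * Real.sqrt (p x)) ^ 2) :=
                  (Real.sqrt_sq hsum_nonneg).symm
              _ ≤ Real.sqrt ε := Real.sqrt_le_sqrt this
    have : B - S ≤ Real.sqrt ε := by
      rw [hB, hS, ← Finset.sum_sub_distrib]; exact key
    linarith
  -- Step 3: log B ≤ B - 1
  have hlog : Real.log B ≤ B - 1 := Real.log_le_sub_one_of_pos hpos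
  rw [hexp]
  linarith
end
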